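/- Let Φ be a Leonard system and let B be the matrix representing A with respect to a Φ-standard basis, with entries b_i = B_{i,i+1}, a_i = B_{ii}, c_i = B_{i,i−1}. Then: (i) b_{i−1} c_i = x_i for 1 ≤ i ≤ d, where x_i = tr(E*_i A E*_{i−1} A); (ii) c_i + a_i + b_i = θ_0 for 0 ≤ i ≤ d (with b_d = 0, c_0 = 0), where θ_0 is the eigenvalue of A for E_0; (iii) b_0 b_1 ⋯ b_{i−1} = p_i(θ_0) for 0 ≤ i ≤ d, where the p_i are the monic three-term-recurrence polynomials of Φ; in particular p_i(θ_0) ≠ 0 for 0 ≤ i ≤ d. -/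

import Mathlib

open Matrix Polynomial

def IsTridiag {K : Type*} [Field K] {n : ℕ} (M : Matrix (Fin n) (Fin n) K) : Prop :=
  ∀ i j : Fin n, ((i : ℕ) + 1 < j ∨ (j : ℕ) + 1 < i) → M i j = 0

def IsIrredTridiag {K : Type*} [Field K] {n : ℕ} (M : Matrix (Fin n) (Fin n) K) : Prop :=
  IsTridiag M ∧ ∀ i j : Fin n, ((i : ℕ) + 1 = j ∨ (j : ℕ) + 1 = i) → M i j ≠ 0

/-- Entry of a matrix with natural-number indices; `0` when out of range. -/
def mentry {K : Type*} [Field K] {n : ℕ} (M : Matrix (Fin n) (Fin n) K) (i j : ℕ) : K :=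
  if h : i < n ∧ j < n then M ⟨i, h.1⟩ ⟨j, h.2⟩ else 0

/-- A family indexed by `Fin (d+1)` viewed as indexed by `ℕ`, with value `0` out of range. -/
def natIdx {d : ℕ} {M : Type*} [Zero M] (E : Fin (d+1) → M) (n : ℕ) : M :=
  if h : n < d + 1 then E ⟨n, h⟩ else 0

/-- A Leonard system of diameter `d` in the matrix algebra `Mat_{d+1}(K)`:
`A`, `As` are multiplicity-free with eigenvalues `θ i`, `θs i` and primitive
idempotents `E i`, `Es i`, satisfying the tridiagonal conditions. -/
structure LeonardSystem (K : Type*) [Field K] (d : ℕ) where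
  A : Matrix (Fin (d+1)) (Fin (d+1)) K
  As : Matrix (Fin (d+1)) (Fin (d+1)) K
  E : Fin (d+1) → Matrix (Fin (d+1)) (Fin (d+1)) K
  Es : Fin (d+1) → Matrix (Fin (d+1)) (Fin (d+1)) K
  θ : Fin (d+1) → K
  θs : Fin (d+1) → K
  θ_inj : Function.Injective θ
  θs_inj : Function.Injective θs
  E_ne : ∀ i, E i ≠ 0
  Es_ne : ∀ i, Es i ≠ 0
  E_mul : ∀ i j, E i * E j = if i = j then E i else 0
  Es_mul : ∀ i j, Es i * Es j = if i = j then Es i else 0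
  E_sum : ∑ i, E i = 1
  Es_sum : ∑ i, Es i = 1
  A_eq : A = ∑ i, θ i • E i
  As_eq : As = ∑ i, θs i • Es i
  EAsE_zero : ∀ i j : Fin (d+1), ((i:ℕ) + 1 < j ∨ (j:ℕ) + 1 < i) → E i * As * E j = 0
  EAsE_ne : ∀ i j : Fin (d+1), ((i:ℕ) + 1 = j ∨ (j:ℕ) + 1 = i) → E i * As * E j ≠ 0
  EsAEs_zero : ∀ i j : Fin (d+1), ((i:ℕ) + 1 < j ∨ (j:ℕ) + 1 < i) → Es i * A * Es j = 0
  EsAEs_ne : ∀ i j : Fin (d+1), ((i:ℕ) + 1 = j ∨ (j:ℕ) + 1 = i) → Es i * A * Es j ≠ 0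

/-- A Leonard pair in `Mat_{d+1}(K)`. -/
structure LeonardPair (K : Type*) [Field K] (d : ℕ) where
  A : Matrix (Fin (d+1)) (Fin (d+1)) K
  As : Matrix (Fin (d+1)) (Fin (d+1)) K
  cond1 : ∃ P : Matrix (Fin (d+1)) (Fin (d+1)) K, IsUnit P ∧
    IsIrredTridiag (P⁻¹ * A * P) ∧ (P⁻¹ * As * P).IsDiag
  cond2 : ∃ P : Matrix (Fin (d+1)) (Fin (d+1)) K, IsUnit P ∧
    (P⁻¹ * A * P).IsDiag ∧ IsIrredTridiag (P⁻¹ * As * P)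

/-!
Every primitive idempotent of a Leonard system has rank one, so `E*_i u` spans `E*_i V` and
`tr (E*_i X)` is the scalar by which `E*_i X` acts on `E*_i u`; this identifies `a_i` and `x_i`
with entries of `B`. The vectors `E*_i u` are nonzero: if `E*_t u = 0` then `E*_t E_0 = 0`, and
once `E*_t` kills `E_0, …, E_j` we get `E*_t E_{j+1} A* E_j = E*_t A* E_j = θ*_t E*_t E_j = 0`
(as `A*` maps `E_j V` into `E_{j-1} V + E_j V + E_{j+1} V`), which forces `E*_t E_{j+1} = 0`
because `E_{j+1} A* E_j ≠ 0` and `E_{j+1}` has rank one; hence `E*_t = ∑ E*_t E_j = 0`.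
As `A u = θ_0 u` and `u = ∑ E*_i u`, every row of `B` sums to `θ_0`; together with
`x_i = b_{i-1} c_i`, the three-term recurrence evaluated at `θ_0` becomes
`p_i(θ_0) = b_0 ⋯ b_{i-1}`, which is nonzero because `B` is irreducible tridiagonal.
-/

open Module

namespace Matrix

variable {K n : Type*} [Field K] [Fintype n]

theorem exists_mulVec_eq_smul_of_finrank_range_eq_one {P : Matrix n n K} {w : n → K}
    (hP : finrank K (LinearMap.range P.mulVecLin) = 1) (hw : w ∈ LinearMap.range P.mulVecLin)
    (hw0 : w ≠ 0) (y : n → K) : ∃ c : K, P *ᵥ y = c • w := by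
  obtain ⟨c, hc⟩ := (finrank_eq_one_iff_of_nonzero' (⟨w, hw⟩ : LinearMap.range P.mulVecLin)
    (by simpa using hw0)).mp hP ⟨P *ᵥ y, y, rfl⟩
  exact ⟨c, (congrArg Subtype.val hc).symm⟩

theorem mul_eq_zero_of_mulVec_eq_zero_of_finrank_range_eq_one {X P : Matrix n n K} {w : n → K}
    (hP : finrank K (LinearMap.range P.mulVecLin) = 1) (hw : w ∈ LinearMap.range P.mulVecLin)
    (hw0 : w ≠ 0) (hXw : X *ᵥ w = 0) : X * P = 0 := by
  classical
  refine ext_of_mulVec_single fun i => ?_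
  obtain ⟨c, hc⟩ := exists_mulVec_eq_smul_of_finrank_range_eq_one hP hw hw0 (Pi.single i 1)
  rw [← mulVec_mulVec, hc, mulVec_smul, hXw, smul_zero, zero_mulVec]

theorem trace_eq_one_of_isIdempotentElem [DecidableEq n] {P : Matrix n n K}
    (hPP : IsIdempotentElem P) (hP : finrank K (LinearMap.range P.mulVecLin) = 1) :
    P.trace = 1 := by
  have hproj := LinearMap.IsIdempotentElem.isProj_range (toLin' P) (hPP.map toLinAlgEquiv')
  rw [← trace_toLin'_eq, hproj.trace, toLin'_apply', hP, Nat.cast_one]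

theorem trace_mul_eq_of_mulVec_eq_smul [DecidableEq n] {P C : Matrix n n K} {w : n → K} {s : K}
    (hPP : IsIdempotentElem P) (hP : finrank K (LinearMap.range P.mulVecLin) = 1)
    (hw : w ∈ LinearMap.range P.mulVecLin) (hw0 : w ≠ 0) (hC : (P * C) *ᵥ w = s • w) :
    (P * C).trace = s := by
  have hPCP : P * C * P = s • P := by
    refine ext_of_mulVec_single fun i => ?_
    obtain ⟨c, hc⟩ := exists_mulVec_eq_smul_of_finrank_range_eq_one hP hw hw0 (Pi.single i 1)
    rw [← mulVec_mulVec, smul_mulVec, hc, mulVec_smul, hC, smul_comm]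
  calc (P * C).trace = (P * C * P).trace := by rw [trace_mul_cycle, hPP.eq]
    _ = s := by
      rw [hPCP, trace_smul, trace_eq_one_of_isIdempotentElem hPP hP, smul_eq_mul, mul_one]

theorem finrank_range_mulVecLin_eq_one [DecidableEq n] {ι : Type*} [Fintype ι]
    {E : ι → Matrix n n K} (he : OrthogonalIdempotents E) (hne : ∀ i, E i ≠ 0)
    (hcard : Fintype.card ι = Fintype.card n) (i : ι) :
    finrank K (LinearMap.range (E i).mulVecLin) = 1 := by
  classical
  let R : ι → Submodule K (n → K) := fun j => LinearMap.range (E j).mulVecLin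
  have hsum : ∑ j, finrank K (R j) ≤ Fintype.card n := by
    let f : (∀ j, R j) →ₗ[K] n → K :=
      LinearMap.lsum K (fun j => R j) K fun j => (R j).subtype
    have hf : Function.Injective f := by
      rw [← LinearMap.ker_eq_bot, LinearMap.ker_eq_bot']
      intro v hv
      funext k
      have hproj (j : ι) : E k *ᵥ (v j : n → K) = if k = j then (v j : n → K) else 0 := by
        obtain ⟨y, hy⟩ := (v j).2
        rw [← hy, mulVecLin_apply, mulVec_mulVec, he.mul_eq]
        split_ifs <;> simp [*]
      have hEk : E k *ᵥ f v = v k := by simp [f, mulVec_sum, hproj]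
      exact Subtype.ext (by rw [← hEk, hv, mulVec_zero]; rfl)
    simpa [finrank_pi_fintype] using LinearMap.finrank_le_finrank_of_injective hf
  have hpos : ∀ j, 1 ≤ finrank K (R j) := fun j => by
    rw [Nat.one_le_iff_ne_zero, Ne, Submodule.finrank_eq_zero, LinearMap.range_eq_bot]
    exact fun h => hne j (toLin'.injective (by rw [toLin'_apply', h, map_zero]))
  have hone : ∑ _j : ι, 1 = ∑ j, finrank K (R j) :=
    le_antisymm (Finset.sum_le_sum fun j _ => hpos j) (by simpa [hcard] using hsum)
  exact ((Finset.sum_eq_sum_iff_of_le fun j _ => hpos j).mp hone i (Finset.mem_univ i)).symm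

end Matrix

theorem OrthogonalIdempotents.sum_smul_mul {R A ι : Type*} [CommSemiring R] [Semiring A]
    [Algebra R A] [Fintype ι] {E : ι → A} (he : OrthogonalIdempotents E) (θ : ι → R)
    (i : ι) : (∑ j, θ j • E j) * E i = θ i • E i := by
  classical
  simp [Finset.sum_mul, he.mul_eq]

theorem OrthogonalIdempotents.mul_sum_smul {R A ι : Type*} [CommSemiring R] [Semiring A]
    [Algebra R A] [Fintype ι] {E : ι → A} (he : OrthogonalIdempotents E) (θ : ι → R)
    (i : ι) : E i * ∑ j, θ j • E j = θ i • E i := by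
  classical
  simp [Finset.mul_sum, he.mul_eq]

section Tridiagonal

variable {K : Type*} [Field K] {n : ℕ}

theorem mentry_of_lt (M : Matrix (Fin n) (Fin n) K) {i j : ℕ} (hi : i < n) (hj : j < n) :
    mentry M i j = M ⟨i, hi⟩ ⟨j, hj⟩ :=
  dif_pos ⟨hi, hj⟩

theorem IsTridiag.mentry_eq_zero {M : Matrix (Fin n) (Fin n) K} (hM : IsTridiag M) {i j : ℕ}
    (hij : i + 1 < j ∨ j + 1 < i) : mentry M i j = 0 := by
  unfold mentry
  split_ifs with h
  · exact hM ⟨i, h.1⟩ ⟨j, h.2⟩ hij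
  · rfl

theorem IsTridiag.sum_row {M : Matrix (Fin n) (Fin n) K} (hM : IsTridiag M) (i : Fin n) :
    ∑ j, M i j = (if (i : ℕ) = 0 then 0 else mentry M i (i - 1)) + mentry M i i
      + mentry M i (i + 1) := by
  have hout : ∀ j ≥ n, mentry M i j = 0 := fun j hj => by simp [mentry, hj.not_gt]
  calc ∑ j, M i j = ∑ j ∈ Finset.range n, mentry M i j := by
        rw [← Fin.sum_univ_eq_sum_range]
        exact Finset.sum_congr rfl fun j _ => (mentry_of_lt M i.isLt j.isLt).symm
    _ = ∑ j ∈ Finset.range (n + i + 2), mentry M i j :=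
        Finset.sum_subset (Finset.range_subset_range.mpr (by omega)) fun j _ hj =>
          hout j (by simpa using hj)
    _ = ∑ j ∈ Finset.range (i + 2), mentry M i j :=
        (Finset.sum_subset (Finset.range_subset_range.mpr (by omega)) fun j _ hj =>
          hM.mentry_eq_zero (Or.inl (by rw [Finset.mem_range] at hj; omega))).symm
    _ = _ := by
        obtain ⟨_ | i, hi⟩ := i
        · simp [Finset.sum_range_succ]
        · rw [Finset.sum_range_succ, Finset.sum_range_succ, Finset.sum_range_succ,
            Finset.sum_eq_zero fun j hj =>
              hM.mentry_eq_zero (Or.inr (show j + 1 < i + 1 by rw [Finset.mem_range] at hj; omega))]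
          simp

theorem IsIrredTridiag.mentry_succ_ne_zero {M : Matrix (Fin n) (Fin n) K}
    (hM : IsIrredTridiag M) {i : ℕ} (hi : i + 1 < n) : mentry M i (i + 1) ≠ 0 := by
  rw [mentry, dif_pos ⟨by omega, hi⟩]
  exact hM.2 _ _ (Or.inl rfl)

end Tridiagonal

theorem Polynomial.eval_eq_prod_of_threeTermRecurrence {R : Type*} [CommRing R] {d : ℕ}
    {a x b c : ℕ → R} {θ : R} {p : ℕ → R[X]} (hp0 : p 0 = 1)
    (hrec : ∀ i ≤ d, X * p i = p (i + 1) + C (a i) * p i + C (x i) * p (i - 1))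
    (hx0 : x 0 = 0) (hx : ∀ i, 1 ≤ i → i ≤ d → x i = b (i - 1) * c i) (hc0 : c 0 = 0)
    (hrow : ∀ i ≤ d, c i + a i + b i = θ) :
    ∀ i ≤ d + 1, (p i).eval θ = ∏ h ∈ Finset.range i, b h := by
  have hstep : ∀ i ≤ d,
      (p (i + 1)).eval θ = (c i + b i) * (p i).eval θ - x i * (p (i - 1)).eval θ := by
    intro i hi
    have h := congrArg (eval θ) (hrec i hi)
    simp only [eval_mul, eval_add, eval_X, eval_C] at h
    linear_combination -h - (p i).eval θ * hrow i hi
  have hpair : ∀ i ≤ d, (p i).eval θ = ∏ h ∈ Finset.range i, b h ∧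
      (p (i + 1)).eval θ = ∏ h ∈ Finset.range (i + 1), b h := by
    intro i hi
    induction i with
    | zero => simp [hstep 0 (Nat.zero_le d), hp0, hx0, hc0]
    | succ i ih =>
      obtain ⟨hpi, hpi1⟩ := ih (by omega)
      refine ⟨hpi1, ?_⟩
      rw [hstep (i + 1) hi, hpi1, Nat.add_sub_cancel, hpi, hx (i + 1) (by omega) hi,
        Nat.add_sub_cancel, Finset.prod_range_succ b (i + 1), Finset.prod_range_succ b i]
      ring
  intro i hi
  rcases i with _ | i
  · simp [hp0]
  · exact (hpair i (by omega)).2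

namespace LeonardSystem

variable {K : Type*} [Field K] {d : ℕ} (L : LeonardSystem K d)

theorem orthogonalIdempotents_E : OrthogonalIdempotents L.E :=
  OrthogonalIdempotents.iff_mul_eq.mpr L.E_mul

theorem orthogonalIdempotents_Es : OrthogonalIdempotents L.Es :=
  OrthogonalIdempotents.iff_mul_eq.mpr L.Es_mul

theorem finrank_range_E (i : Fin (d + 1)) : finrank K (LinearMap.range (L.E i).mulVecLin) = 1 :=
  finrank_range_mulVecLin_eq_one L.orthogonalIdempotents_E L.E_ne rfl i

theorem finrank_range_Es (i : Fin (d + 1)) :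
    finrank K (LinearMap.range (L.Es i).mulVecLin) = 1 :=
  finrank_range_mulVecLin_eq_one L.orthogonalIdempotents_Es L.Es_ne rfl i

theorem A_mul_E (i : Fin (d + 1)) : L.A * L.E i = L.θ i • L.E i := by
  rw [L.A_eq, L.orthogonalIdempotents_E.sum_smul_mul]

theorem Es_mul_As (i : Fin (d + 1)) : L.Es i * L.As = L.θs i • L.Es i := by
  rw [L.As_eq, L.orthogonalIdempotents_Es.mul_sum_smul]

variable {L} {u : Fin (d + 1) → K}

theorem Es_mulVec_ne_zero (hu : L.E 0 *ᵥ u = u) (hu0 : u ≠ 0) (t : Fin (d + 1)) :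
    L.Es t *ᵥ u ≠ 0 := by
  intro ht
  have hzero : ∀ k, L.Es t * L.E k = 0 := by
    intro k
    induction k using WellFoundedLT.induction with
    | _ k ih =>
    rcases Fin.eq_zero_or_eq_succ k with rfl | ⟨j, rfl⟩
    · exact mul_eq_zero_of_mulVec_eq_zero_of_finrank_range_eq_one (L.finrank_range_E 0)
        ⟨u, hu⟩ hu0 ht
    · have hkill : L.Es t * (L.E j.succ * L.As * L.E j.castSucc) = 0 := by
        calc L.Es t * (L.E j.succ * L.As * L.E j.castSucc)
            = ∑ k, L.Es t * (L.E k * L.As * L.E j.castSucc) := by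
              refine Eq.symm (Fintype.sum_eq_single j.succ fun k hk => ?_)
              rcases lt_or_gt_of_ne hk with hlt | hgt
              · rw [← Matrix.mul_assoc, ← Matrix.mul_assoc, ih k hlt, Matrix.zero_mul,
                  Matrix.zero_mul]
              · rw [L.EAsE_zero k j.castSucc (Or.inr hgt),
                  Matrix.mul_zero]
          _ = L.Es t * L.As * L.E j.castSucc := by
              rw [← Finset.mul_sum, ← Finset.sum_mul, ← Finset.sum_mul, L.E_sum,
                Matrix.one_mul, Matrix.mul_assoc]
          _ = 0 := by
              rw [L.Es_mul_As, smul_mul_assoc, ih _ Fin.castSucc_lt_succ, smul_zero]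
      obtain ⟨y, hy⟩ : ∃ y, (L.E j.succ * L.As * L.E j.castSucc) *ᵥ y ≠ 0 := by
        by_contra! h
        exact L.EAsE_ne j.succ j.castSucc (Or.inr (by simp))
          (ext_of_mulVec_single fun i => by rw [h, zero_mulVec])
      refine mul_eq_zero_of_mulVec_eq_zero_of_finrank_range_eq_one (L.finrank_range_E j.succ)
        ⟨(L.As * L.E j.castSucc) *ᵥ y, by simp [mulVec_mulVec, Matrix.mul_assoc]⟩ hy ?_
      rw [mulVec_mulVec, hkill, zero_mulVec]
  apply L.Es_ne t
  calc L.Es t = L.Es t * ∑ k, L.E k := by rw [L.E_sum, Matrix.mul_one]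
    _ = 0 := by simp [Finset.mul_sum, hzero]

theorem trace_Es_mul_eq (hu : L.E 0 *ᵥ u = u) (hu0 : u ≠ 0) {k : Fin (d + 1)}
    {C : Matrix (Fin (d + 1)) (Fin (d + 1)) K} {s : K}
    (h : (L.Es k * C) *ᵥ (L.Es k *ᵥ u) = s • (L.Es k *ᵥ u)) : (L.Es k * C).trace = s :=
  trace_mul_eq_of_mulVec_eq_smul (L.orthogonalIdempotents_Es.idem k) (L.finrank_range_Es k)
    ⟨u, rfl⟩ (Es_mulVec_ne_zero hu hu0 k) h

variable {B : Matrix (Fin (d + 1)) (Fin (d + 1)) K}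

theorem Es_mul_A_mulVec_Es (hB : ∀ j, L.A *ᵥ (L.Es j *ᵥ u) = ∑ i, B i j • (L.Es i *ᵥ u))
    (k j : Fin (d + 1)) : (L.Es k * L.A) *ᵥ (L.Es j *ᵥ u) = B k j • (L.Es k *ᵥ u) := by
  rw [← mulVec_mulVec, hB j]
  simp [mulVec_sum, mulVec_smul, mulVec_mulVec, L.Es_mul, apply_ite (· *ᵥ u)]

theorem trace_Es_mul_A (hu : L.E 0 *ᵥ u = u) (hu0 : u ≠ 0)
    (hB : ∀ j, L.A *ᵥ (L.Es j *ᵥ u) = ∑ i, B i j • (L.Es i *ᵥ u)) (k : Fin (d + 1)) :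
    (L.Es k * L.A).trace = B k k :=
  trace_Es_mul_eq hu hu0 (Es_mul_A_mulVec_Es hB k k)

theorem trace_Es_mul_A_mul_Es_mul_A (hu : L.E 0 *ᵥ u = u) (hu0 : u ≠ 0)
    (hB : ∀ j, L.A *ᵥ (L.Es j *ᵥ u) = ∑ i, B i j • (L.Es i *ᵥ u)) (i j : Fin (d + 1)) :
    (L.Es i * L.A * L.Es j * L.A).trace = B j i * B i j := by
  have hassoc : L.Es i * L.A * L.Es j * L.A = L.Es i * (L.A * L.Es j * L.A) := by
    simp only [Matrix.mul_assoc]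
  rw [hassoc]
  refine trace_Es_mul_eq hu hu0 ?_
  rw [← hassoc, Matrix.mul_assoc, ← mulVec_mulVec, Es_mul_A_mulVec_Es hB j i, mulVec_smul,
    Es_mul_A_mulVec_Es hB i j, smul_smul]

theorem sum_row_eq_θ_zero (hu : L.E 0 *ᵥ u = u) (hu0 : u ≠ 0)
    (hB : ∀ j, L.A *ᵥ (L.Es j *ᵥ u) = ∑ i, B i j • (L.Es i *ᵥ u)) (k : Fin (d + 1)) :
    ∑ j, B k j = L.θ 0 := by
  have hAu : L.A *ᵥ u = L.θ 0 • u := by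
    rw [← hu, mulVec_mulVec, L.A_mul_E, smul_mulVec]
  refine smul_left_injective K (Es_mulVec_ne_zero hu hu0 k) ?_
  calc (∑ j, B k j) • (L.Es k *ᵥ u) = ∑ j, (L.Es k * L.A) *ᵥ (L.Es j *ᵥ u) := by
        simp only [Finset.sum_smul, Es_mul_A_mulVec_Es hB]
    _ = (L.Es k * L.A) *ᵥ u := by rw [← mulVec_sum, ← sum_mulVec, L.Es_sum, one_mulVec]
    _ = L.θ 0 • (L.Es k *ᵥ u) := by rw [← mulVec_mulVec, hAu, mulVec_smul]

theorem isIrredTridiag (hu : L.E 0 *ᵥ u = u) (hu0 : u ≠ 0)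
    (hB : ∀ j, L.A *ᵥ (L.Es j *ᵥ u) = ∑ i, B i j • (L.Es i *ᵥ u)) :
    IsIrredTridiag B := by
  have hv0 := Es_mulVec_ne_zero hu hu0
  refine ⟨fun k j hkj => ?_, fun k j hkj hB0 => L.EsAEs_ne k j hkj ?_⟩
  · have h := Es_mul_A_mulVec_Es hB k j
    rw [mulVec_mulVec, L.EsAEs_zero k j hkj, zero_mulVec] at h
    exact (smul_eq_zero.mp h.symm).resolve_right (hv0 k)
  · refine mul_eq_zero_of_mulVec_eq_zero_of_finrank_range_eq_one (L.finrank_range_Es j)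
      (w := L.Es j *ᵥ u) ⟨u, rfl⟩ (hv0 j) ?_
    rw [Es_mul_A_mulVec_Es hB, hB0, zero_smul]

end LeonardSystem

theorem stmt16 {K : Type*} [Field K] {d : ℕ} (L : LeonardSystem K d)
    (u : Fin (d+1) → K) (hu : L.E 0 *ᵥ u = u) (hu0 : u ≠ 0)
    (B : Matrix (Fin (d+1)) (Fin (d+1)) K)
    (hB : ∀ j : Fin (d+1), L.A *ᵥ (L.Es j *ᵥ u) = ∑ i, B i j • (L.Es i *ᵥ u))
    (a x : ℕ → K)
    (ha : ∀ i : Fin (d+1), a (i:ℕ) = Matrix.trace (L.Es i * L.A))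
    (hx0 : x 0 = 0)
    (hx : ∀ i : Fin (d+1), 1 ≤ (i:ℕ) →
      x (i:ℕ) = Matrix.trace (L.Es i * L.A * natIdx L.Es ((i:ℕ) - 1) * L.A))
    (p : ℕ → Polynomial K) (hp0 : p 0 = 1)
    (hrec : ∀ i : ℕ, i ≤ d →
      Polynomial.X * p i = p (i+1) + Polynomial.C (a i) * p i + Polynomial.C (x i) * p (i-1))
    :
    (∀ i : ℕ, 1 ≤ i → i ≤ d → mentry B (i-1) i * mentry B i (i-1) = x i) ∧
    (∀ i : Fin (d+1),
      (if (i:ℕ) = 0 then 0 else mentry B (i:ℕ) ((i:ℕ)-1)) +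
        mentry B (i:ℕ) (i:ℕ) + mentry B (i:ℕ) ((i:ℕ)+1) = L.θ 0) ∧
    (∀ i : Fin (d+1),
      (∏ h ∈ Finset.range (i:ℕ), mentry B h (h+1)) = (p (i:ℕ)).eval (L.θ 0) ∧
      (p (i:ℕ)).eval (L.θ 0) ≠ 0) := by
  have hirr := LeonardSystem.isIrredTridiag hu hu0 hB
  have hdiag : ∀ i ≤ d, a i = mentry B i i := fun i hi => by
    rw [ha ⟨i, by omega⟩, LeonardSystem.trace_Es_mul_A hu hu0 hB, mentry_of_lt]
  have hbc : ∀ i, 1 ≤ i → i ≤ d → mentry B (i-1) i * mentry B i (i-1) = x i := by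
    intro i h1 h2
    have hnat : natIdx L.Es (i - 1) = L.Es ⟨i - 1, by omega⟩ := dif_pos (by omega)
    rw [hx ⟨i, by omega⟩ h1, hnat, LeonardSystem.trace_Es_mul_A_mul_Es_mul_A hu hu0 hB,
      mentry_of_lt B (by omega) (by omega), mentry_of_lt B (by omega) (by omega)]
  have hrow : ∀ i : Fin (d+1), (if (i:ℕ) = 0 then 0 else mentry B i (i - 1)) + mentry B i i
      + mentry B i (i + 1) = L.θ 0 := fun i =>
    (hirr.1.sum_row i).symm.trans (LeonardSystem.sum_row_eq_θ_zero hu hu0 hB i)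
  have hprod := eval_eq_prod_of_threeTermRecurrence (b := fun h => mentry B h (h + 1))
    (c := fun i => if i = 0 then 0 else mentry B i (i - 1)) hp0 hrec hx0
    (fun i h1 h2 => by rw [if_neg (show i ≠ 0 by omega), Nat.sub_add_cancel h1, hbc i h1 h2])
    (if_pos rfl) (fun i hi => by rw [hdiag i hi]; exact hrow ⟨i, by omega⟩)
  refine ⟨hbc, hrow, fun i => ⟨(hprod i (by omega)).symm, ?_⟩⟩
  rw [hprod i (by omega), Finset.prod_ne_zero_iff]
  exact fun h hh => hirr.mentry_succ_ne_zero (by rw [Finset.mem_range] at hh; omega)
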